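/- arXiv:2202.08821 — 4 statements merged into one kernel-verified Lean document; each statement's English description precedes it below -/
import Mathlib

section
/- If the combining function c(a,h) is convex (jointly in its two arguments) and satisfies min(a,h) ≤ c(a,h) ≤ max(a,h), then Σ_i p_i · c(a_i, h_i) ≥ min(A, H); i.e., a convex combining function can never achieve complementary performance. -/
theorem convex_combining_no_complementarity
    (N : ℕ) (p a h : Fin N → ℝ) (c : ℝ → ℝ → ℝ) (A H : ℝ)
    (hp : ∀ i, 0 ≤ p i) (hpsum : ∑ i, p i = 1)
    (hA : A = ∑ i, p i * a i) (hH : H = ∑ i, p i * h i)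
    (hconvex : ConvexOn ℝ Set.univ (fun q : ℝ × ℝ => c q.1 q.2))
    (hbound : ∀ x y : ℝ, min x y ≤ c x y ∧ c x y ≤ max x y) :
    ∑ i, p i * c (a i) (h i) ≥ min A H := by
  have hjensen := hconvex.map_sum_le (t := Finset.univ) (w := p)
    (p := fun i => ((a i, h i) : ℝ × ℝ)) (fun i _ => hp i) hpsum
    (fun i _ => Set.mem_univ _)
  have hsum : (∑ i, p i • ((a i, h i) : ℝ × ℝ)) = (A, H) := by
    rw [hA, hH, Prod.ext_iff]
    simp [Prod.smul_mk, Prod.fst_sum, Prod.snd_sum, smul_eq_mul]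
  rw [hsum] at hjensen
  calc min A H ≤ c A H := (hbound A H).1
    _ ≤ ∑ i, p i * c (a i) (h i) := by simpa [smul_eq_mul] using hjensen
end

section
/- If a combined human-algorithm system exhibits fairness of benefit — i.e., the combined loss is strictly less than the human loss in every regime: (1-s_i)a_i + s_i h_i < h_i for all i — then the system cannot achieve complementarity, i.e., Σ_i p_i((1-s_i)a_i + s_i h_i) ≥ min(A, H). -/
theorem fairness_of_benefit_no_complementarity
    (N : ℕ) (p a h s : Fin N → ℝ) (A H : ℝ)
    (hp : ∀ i, 0 ≤ p i) (hpsum : ∑ i, p i = 1)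
    (hA : A = ∑ i, p i * a i) (hH : H = ∑ i, p i * h i)
    (hs : ∀ i, 0 ≤ s i ∧ s i ≤ 1)
    (hfair : ∀ i, (1 - s i) * a i + s i * h i < h i) :
    ∑ i, p i * ((1 - s i) * a i + s i * h i) ≥ min A H := by
  have key : A ≤ ∑ i, p i * ((1 - s i) * a i + s i * h i) := by
    rw [hA]
    apply Finset.sum_le_sum
    intro i _
    have h1 := (hs i).1
    have h2 := (hs i).2
    have h3 := hfair i
    have hap : a i < h i := by nlinarith
    nlinarith [hp i, mul_nonneg (hp i) (mul_nonneg h1 (le_of_lt (sub_pos.mpr hap)))]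
  exact le_trans (min_le_left A H) key
end

section
/- Suppose A ≤ H and the system exhibits complementarity (C < A). Then the sum of loss disparities satisfies A - C + (H - A)·Σ_i p_i s_i < ε_a + ε_h, where ε_a = max_i a_i - min_i a_i and ε_h = max_i h_i - min_i h_i. -/
theorem complementarity_lower_bounds_disparity
    (N : ℕ) [NeZero N] (p s da dh : Fin N → ℝ) (A H C εa εh : ℝ)
    (hp : ∀ i, 0 < p i) (hpsum : ∑ i, p i = 1)
    (hda : ∑ i, p i * da i = 0) (hdh : ∑ i, p i * dh i = 0)
    (hs : ∀ i, 0 ≤ s i ∧ s i ≤ 1)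
    (hAH : A ≤ H)
    (hC : C = ∑ i, p i * ((1 - s i) * (A + da i) + s i * (H + dh i)))
    (hcomp : C < A)
    (hεa : εa = (Finset.univ.sup' Finset.univ_nonempty fun i => A + da i) -
      (Finset.univ.inf' Finset.univ_nonempty fun i => A + da i))
    (hεh : εh = (Finset.univ.sup' Finset.univ_nonempty fun i => H + dh i) -
      (Finset.univ.inf' Finset.univ_nonempty fun i => H + dh i)) :
    A - C + (H - A) * ∑ i, p i * s i < εa + εh := by
  set Ma := (Finset.univ.sup' Finset.univ_nonempty fun i => A + da i) with hMa
  set ma := (Finset.univ.inf' Finset.univ_nonempty fun i => A + da i) with hma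
  set Mh := (Finset.univ.sup' Finset.univ_nonempty fun i => H + dh i) with hMh
  set mh := (Finset.univ.inf' Finset.univ_nonempty fun i => H + dh i) with hmh
  have hC' : C = A + (H - A) * (∑ i, p i * s i) - ∑ i, p i * s i * (da i - dh i) := by
    rw [hC]
    have hcongr : ∀ i ∈ Finset.univ, p i * ((1 - s i) * (A + da i) + s i * (H + dh i))
        = p i * A + p i * da i + ((H - A) * (p i * s i) - p i * s i * (da i - dh i)) := by
      intros; ring
    rw [Finset.sum_congr rfl hcongr]
    rw [Finset.sum_add_distrib, Finset.sum_add_distrib, Finset.sum_sub_distrib,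
      ← Finset.sum_mul, ← Finset.mul_sum, hpsum, hda]
    ring
  set T := ∑ i, p i * s i * (da i - dh i) with hT
  have hps_nonneg : ∀ i, 0 ≤ p i * s i := fun i => mul_nonneg (hp i).le (hs i).1
  have hpssum_nonneg : 0 ≤ ∑ i, p i * s i :=
    Finset.sum_nonneg fun i _ => hps_nonneg i
  have hpssum : ∑ i, p i * s i ≤ 1 := by
    rw [← hpsum]
    refine Finset.sum_le_sum fun i _ => ?_
    nlinarith [(hp i).le, (hs i).2]
  have hTpos : 0 < T := by nlinarith
  have hle_sup_a : ∀ i, A + da i ≤ Ma := fun i =>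
    Finset.le_sup' (fun i => A + da i) (Finset.mem_univ i)
  have hinf_le_a : ∀ i, ma ≤ A + da i := fun i =>
    Finset.inf'_le (fun i => A + da i) (Finset.mem_univ i)
  have hle_sup_h : ∀ i, H + dh i ≤ Mh := fun i =>
    Finset.le_sup' (fun i => H + dh i) (Finset.mem_univ i)
  have hinf_le_h : ∀ i, mh ≤ H + dh i := fun i =>
    Finset.inf'_le (fun i => H + dh i) (Finset.mem_univ i)
  -- averaging bounds
  have havg_a : ∑ i, p i * (A + da i) = A := by
    simp only [mul_add, Finset.sum_add_distrib, hda, add_zero, ← Finset.sum_mul, hpsum, one_mul]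
  have havg_h : ∑ i, p i * (H + dh i) = H := by
    simp only [mul_add, Finset.sum_add_distrib, hdh, add_zero, ← Finset.sum_mul, hpsum, one_mul]
  have hAMa : A ≤ Ma := by
    rw [← havg_a]
    calc ∑ i, p i * (A + da i) ≤ ∑ i, p i * Ma :=
          Finset.sum_le_sum fun i _ => mul_le_mul_of_nonneg_left (hle_sup_a i) (hp i).le
      _ = Ma := by rw [← Finset.sum_mul, hpsum, one_mul]
  have hmaA : ma ≤ A := by
    rw [← havg_a]
    calc ma = ∑ i, p i * ma := by rw [← Finset.sum_mul, hpsum, one_mul]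
      _ ≤ ∑ i, p i * (A + da i) :=
          Finset.sum_le_sum fun i _ => mul_le_mul_of_nonneg_left (hinf_le_a i) (hp i).le
  have hHMh : H ≤ Mh := by
    rw [← havg_h]
    calc ∑ i, p i * (H + dh i) ≤ ∑ i, p i * Mh :=
          Finset.sum_le_sum fun i _ => mul_le_mul_of_nonneg_left (hle_sup_h i) (hp i).le
      _ = Mh := by rw [← Finset.sum_mul, hpsum, one_mul]
  have hmhH : mh ≤ H := by
    rw [← havg_h]
    calc mh = ∑ i, p i * mh := by rw [← Finset.sum_mul, hpsum, one_mul]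
      _ ≤ ∑ i, p i * (H + dh i) :=
          Finset.sum_le_sum fun i _ => mul_le_mul_of_nonneg_left (hinf_le_h i) (hp i).le
  -- bound T ≤ (Ma - A) + (H - mh)
  have hda_le : ∀ i, da i ≤ Ma - A := fun i => by linarith [hle_sup_a i]
  have hdh_ge : ∀ i, mh - H ≤ dh i := fun i => by linarith [hinf_le_h i]
  have hMnn : 0 ≤ (Ma - A) + (H - mh) := by linarith
  have hTle : T ≤ (Ma - A) + (H - mh) := by
    calc T ≤ ∑ i, p i * s i * ((Ma - A) + (H - mh)) := by
          refine Finset.sum_le_sum fun i _ => ?_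
          exact mul_le_mul_of_nonneg_left (by linarith [hda_le i, hdh_ge i]) (hps_nonneg i)
      _ = (∑ i, p i * s i) * ((Ma - A) + (H - mh)) := by rw [Finset.sum_mul]
      _ ≤ 1 * ((Ma - A) + (H - mh)) := by
          exact mul_le_mul_of_nonneg_right hpssum hMnn
      _ = (Ma - A) + (H - mh) := one_mul _
  rw [hC']
  rw [hεa, hεh]
  -- goal should now follow from: T < εa + εh, i.e. T < (Ma - ma) + (Mh - mh)
  rcases eq_or_lt_of_le hmaA with heqA | hltA
  · rcases eq_or_lt_of_le hHMh with heqH | hltH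
    · -- degenerate: ma = A and Mh = H force da ≡ 0, dh ≡ 0, so T = 0, contradiction
      exfalso
      have hda0 : ∀ i, da i = 0 := by
        intro i
        have h1 : ∀ j ∈ Finset.univ, 0 ≤ p j * da j := by
          intro j _
          have : 0 ≤ da j := by have := hinf_le_a j; rw [← heqA] at this; linarith
          exact mul_nonneg (hp j).le this
        have h2 := (Finset.sum_eq_zero_iff_of_nonneg h1).1 hda i (Finset.mem_univ i)
        exact (mul_eq_zero.1 h2).resolve_left (hp i).ne'
      have hdh0 : ∀ i, dh i = 0 := by
        intro i
        have h1 : ∀ j ∈ Finset.univ, 0 ≤ p j * (-dh j) := by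
          intro j _
          have : dh j ≤ 0 := by have := hle_sup_h j; rw [← heqH] at this; linarith
          nlinarith [(hp j).le]
        have hsum : ∑ j, p j * (-dh j) = 0 := by
          simp only [mul_neg, Finset.sum_neg_distrib, hdh, neg_zero]
        have h2 := (Finset.sum_eq_zero_iff_of_nonneg h1).1 hsum i (Finset.mem_univ i)
        have := (mul_eq_zero.1 h2).resolve_left (hp i).ne'
        linarith
      have : T = 0 := by
        rw [hT]
        apply Finset.sum_eq_zero
        intro i _
        rw [hda0 i, hdh0 i]; ring
      linarith
    · linarith
  · linarith
end

section
/- Let i+ and i- be the regimes where the combined loss c_i = (1-s_i)a_i + s_i h_i is maximized and minimized respectively. If either (h_{i+} ≤ a_{i+} and h_{i-} ≥ a_{i-}) or (h_{i+} ≥ a_{i+} and h_{i-} ≤ a_{i-}), then the combined loss disparity ε_c = c_{i+} - c_{i-} satisfies ε_c ≤ max(ε_a, ε_h). -/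
theorem combined_disparity_upper_bound
    (N : ℕ) [NeZero N] (a h s : Fin N → ℝ) (c : Fin N → ℝ)
    (hs : ∀ i, 0 ≤ s i ∧ s i ≤ 1)
    (hc : ∀ i, c i = (1 - s i) * a i + s i * h i)
    (iplus iminus : Fin N)
    (hmax : ∀ i, c i ≤ c iplus) (hmin : ∀ i, c iminus ≤ c i)
    (hcase : (h iplus ≤ a iplus ∧ h iminus ≥ a iminus) ∨
             (h iplus ≥ a iplus ∧ h iminus ≤ a iminus)) :
    c iplus - c iminus ≤
      max ((Finset.univ.sup' Finset.univ_nonempty a) -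
            (Finset.univ.inf' Finset.univ_nonempty a))
          ((Finset.univ.sup' Finset.univ_nonempty h) -
            (Finset.univ.inf' Finset.univ_nonempty h)) := by
  obtain ⟨hs0p, hs1p⟩ := hs iplus
  obtain ⟨hs0m, hs1m⟩ := hs iminus
  have hcp := hc iplus
  have hcm := hc iminus
  rcases hcase with ⟨h1, h2⟩ | ⟨h1, h2⟩
  · have hcpa : c iplus ≤ a iplus := by nlinarith
    have hcma : a iminus ≤ c iminus := by nlinarith
    have h3 : a iplus ≤ Finset.univ.sup' Finset.univ_nonempty a :=
      Finset.le_sup' a (Finset.mem_univ iplus)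
    have h4 : Finset.univ.inf' Finset.univ_nonempty a ≤ a iminus :=
      Finset.inf'_le a (Finset.mem_univ iminus)
    exact le_max_of_le_left (by linarith)
  · have hcph : c iplus ≤ h iplus := by nlinarith
    have hcmh : h iminus ≤ c iminus := by nlinarith
    have h3 : h iplus ≤ Finset.univ.sup' Finset.univ_nonempty h :=
      Finset.le_sup' h (Finset.mem_univ iplus)
    have h4 : Finset.univ.inf' Finset.univ_nonempty h ≤ h iminus :=
      Finset.inf'_le h (Finset.mem_univ iminus)
    exact le_max_of_le_right (by linarith)
end
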